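/- arXiv:0906.0620 — 6 statements merged into one kernel-verified Lean document; each statement's English description precedes it below -/
import Mathlib

section
/- Let (G,q) be a pre-metric group and let H ⊆ G be an isotropic subgroup. Then H ⊆ H⊥, the restriction of q to H⊥ satisfies q(g+h) = q(g) for all g ∈ H⊥ and h ∈ H, so q induces a quadratic form q̃ on the quotient group H⊥/H, and the Gauss sums satisfy τ⁺(G,q) = τ⁺(H⊥/H, q̃)·|H| and τ⁻(G,q) = τ⁻(H⊥/H, q̃)·|H| (the order |H| regarded as an element of k). -/
/-- The bicharacter associated with a `kˣ`-valued function `q` on `G`: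
`b(g,h) = q(g+h) · q(g)⁻¹ · q(h)⁻¹`. -/
def bchar {k : Type*} [Field k] {G : Type*} [AddCommGroup G] (q : G → kˣ) (g h : G) : kˣ :=
  q (g + h) * (q g)⁻¹ * (q h)⁻¹

/-- `q : G → kˣ` is a quadratic form: `q (-g) = q g` for all `g`, and the associated
function `bchar q` is bimultiplicative. -/
structure IsQuadForm {k : Type*} [Field k] {G : Type*} [AddCommGroup G] (q : G → kˣ) : Prop where
  map_neg : ∀ g : G, q (-g) = q g
  bchar_add_left : ∀ g₁ g₂ h : G, bchar q (g₁ + g₂) h = bchar q g₁ h * bchar q g₂ h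
  bchar_add_right : ∀ g h₁ h₂ : G, bchar q g (h₁ + h₂) = bchar q g h₁ * bchar q g h₂

/-- The Gauss sum `τ⁺(G,q) = ∑_{g ∈ G} q(g)`, as an element of `k`. -/
noncomputable def tauPlus {k : Type*} [Field k] {G : Type*} [AddCommGroup G] (q : G → kˣ) : k :=
  ∑ᶠ g : G, (q g : k)

/-- The Gauss sum `τ⁻(G,q) = ∑_{g ∈ G} q(g)⁻¹`, as an element of `k`. -/
noncomputable def tauMinus {k : Type*} [Field k] {G : Type*} [AddCommGroup G] (q : G → kˣ) : k :=
  ∑ᶠ g : G, (((q g)⁻¹ : kˣ) : k)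

/-- Non-degeneracy of (the bicharacter associated with) `q` : the map
`g ↦ b(g, ·)` from `G` to `Hom(G, kˣ)` is injective. -/
def Nondeg {k : Type*} [Field k] {G : Type*} [AddCommGroup G] (q : G → kˣ) : Prop :=
  Function.Injective fun g : G => fun h : G => bchar q g h

/-- Isomorphism of pre-metric groups: a group isomorphism `φ : G₁ ≃ G₂`
with `q₂ ∘ φ = q₁`. -/
def PMIso {k : Type*} [Field k] {G₁ : Type*} [AddCommGroup G₁] {G₂ : Type*} [AddCommGroup G₂]
    (q₁ : G₁ → kˣ) (q₂ : G₂ → kˣ) : Prop :=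
  ∃ φ : G₁ ≃+ G₂, ∀ g : G₁, q₂ (φ g) = q₁ g

/-! Averaging over translates by `H`: for `h ∈ H` we have `q(g+h) = b(g,h) q(g)`, and
`h ↦ b(g,h)` is a character of `H`, whose sum is `|H|` if `g ∈ H⊥` and `0` otherwise.
Hence `τ⁺(G,q) = ∑_{g ∈ H⊥} q(g)`. On `H⊥` the form is constant on `H`-cosets, so this
sum is `|H|` times the Gauss sum of the induced form on `H⊥/H`. The same applied to `q⁻¹`,
which has the same orthogonal complement, gives `τ⁻`. -/

theorem QuotientAddGroup.sum_comp_mk {A M : Type*} [AddGroup A] [Fintype A] [AddCommMonoid M]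
    (N : AddSubgroup A) [Fintype (A ⧸ N)] (f : A ⧸ N → M) :
    ∑ x : A, f x = Nat.card N • ∑ c, f c := by
  classical
  rw [← Fintype.sum_fiberwise (fun x : A => (x : A ⧸ N)), Finset.smul_sum]
  refine Fintype.sum_congr _ _ fun c => ?_
  have hfiber : Nat.card {x : A // (x : A ⧸ N) = c} = Nat.card N :=
    (Nat.card_congr (QuotientAddGroup.preimageMkEquivAddSubgroupProdSet N {c})).trans
      (by simp)
  rw [Finset.sum_congr rfl fun x _ => congrArg f x.2, Finset.sum_const, Finset.card_univ,
    ← Nat.card_eq_fintype_card, hfiber]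

section

variable {k G : Type*} [Field k] [AddCommGroup G]

theorem map_add_eq_bchar_mul_mul (q : G → kˣ) (g h : G) :
    q (g + h) = bchar q g h * q g * q h := by
  simp [bchar, mul_right_comm _ (q h)⁻¹]

theorem bchar_inv (q : G → kˣ) (g h : G) : bchar q⁻¹ g h = (bchar q g h)⁻¹ := by
  simp only [bchar, Pi.inv_apply, mul_inv, inv_inv]

theorem tauMinus_eq_tauPlus_inv (q : G → kˣ) : tauMinus q = tauPlus q⁻¹ := rfl

section Isotropic

variable {q : G → kˣ} {H : AddSubgroup G}

theorem bchar_eq_one_of_isotropic (hiso : ∀ h ∈ H, q h = 1) :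
    ∀ h ∈ H, ∀ h' ∈ H, bchar q h h' = 1 := fun h hh h' hh' => by
  simp [bchar, hiso _ (add_mem hh hh'), hiso _ hh, hiso _ hh']

theorem map_add_eq_of_bchar_eq_one (hiso : ∀ h ∈ H, q h = 1) {g : G}
    (hg : ∀ h ∈ H, bchar q g h = 1) {h : G} (hh : h ∈ H) : q (g + h) = q g := by
  rw [map_add_eq_bchar_mul_mul q, hg h hh, hiso h hh, one_mul, mul_one]

end Isotropic

namespace IsQuadForm

variable {q : G → kˣ} (hq : IsQuadForm q)
include hq

theorem bchar_zero_left (h : G) : bchar q 0 h = 1 := by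
  simpa using hq.bchar_add_left 0 0 h

theorem bchar_zero_right (g : G) : bchar q g 0 = 1 := by
  simpa using hq.bchar_add_right g 0 0

theorem bchar_neg_left (g h : G) : bchar q (-g) h = (bchar q g h)⁻¹ := by
  refine eq_inv_of_mul_eq_one_right ?_
  rw [← hq.bchar_add_left, add_neg_cancel, hq.bchar_zero_left]

theorem inv : IsQuadForm q⁻¹ where
  map_neg g := by simp [hq.map_neg g]
  bchar_add_left g₁ g₂ h := by simp only [bchar_inv, hq.bchar_add_left, mul_inv]
  bchar_add_right g h₁ h₂ := by simp only [bchar_inv, hq.bchar_add_right, mul_inv]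

def bcharRight (g : G) (H : AddSubgroup G) : AddChar H k where
  toFun h := bchar q g h
  map_zero_eq_one' := by simp [hq.bchar_zero_right]
  map_add_eq_mul' h h' := by simp [hq.bchar_add_right]

def orthogonal (H : AddSubgroup G) : AddSubgroup G where
  carrier := {g | ∀ h ∈ H, bchar q g h = 1}
  zero_mem' h _ := hq.bchar_zero_left h
  add_mem' {a b} ha hb h hh := by rw [hq.bchar_add_left, ha h hh, hb h hh, mul_one]
  neg_mem' {a} ha h hh := by rw [hq.bchar_neg_left, ha h hh, inv_one]

theorem mem_orthogonal {H : AddSubgroup G} {g : G} :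
    g ∈ hq.orthogonal H ↔ ∀ h ∈ H, bchar q g h = 1 := Iff.rfl

end IsQuadForm

section InducedForm

variable (q : G → kˣ) (H P : AddSubgroup G) (hPH : ∀ g ∈ P, ∀ h ∈ H, bchar q g h = 1)
  (hiso : ∀ h ∈ H, q h = 1)

def inducedForm : P ⧸ H.addSubgroupOf P → kˣ :=
  Quotient.lift (fun x : P => q x) fun x y hxy => by
    have hmem : ((-x + y : P) : G) ∈ H :=
      (QuotientAddGroup.leftRel_apply (s := H.addSubgroupOf P)).mp hxy
    rw [← map_add_eq_of_bchar_eq_one hiso (hPH x x.2) hmem]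
    simp

variable {q} in
theorem IsQuadForm.inducedForm (hq : IsQuadForm q) :
    IsQuadForm (inducedForm q H P hPH hiso) := by
  refine ⟨?_, ?_, ?_⟩
  · rintro ⟨x⟩
    exact hq.map_neg x
  · rintro ⟨x⟩ ⟨y⟩ ⟨z⟩
    exact hq.bchar_add_left x y z
  · rintro ⟨x⟩ ⟨y⟩ ⟨z⟩
    exact hq.bchar_add_right x y z

end InducedForm

theorem IsQuadForm.sum_bcharRight {q : G → kˣ} (hq : IsQuadForm q) (g : G) (H : AddSubgroup G)
    [Fintype H] [Decidable (g ∈ hq.orthogonal H)] :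
    ∑ h : H, hq.bcharRight g H h = if g ∈ hq.orthogonal H then (Fintype.card H : k) else 0 := by
  classical
  rw [AddChar.sum_eq_ite]
  congr 1
  simp [AddChar.eq_zero_iff, hq.mem_orthogonal, IsQuadForm.bcharRight]

theorem IsQuadForm.sum_eq_sum_orthogonal [CharZero k] [Fintype G] {q : G → kˣ}
    (hq : IsQuadForm q) {H : AddSubgroup G} [Fintype H] (hiso : ∀ h ∈ H, q h = 1)
    {P : AddSubgroup G} [Fintype P] (hP : ∀ g, g ∈ P ↔ ∀ h ∈ H, bchar q g h = 1) :
    ∑ g, (q g : k) = ∑ x : P, (q x : k) := by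
  classical
  have hH : (Fintype.card H : k) ≠ 0 := Nat.cast_ne_zero.2 Fintype.card_ne_zero
  have shift (h : H) : ∑ g, (q (g + h) : k) = ∑ g, (q g : k) :=
    Fintype.sum_equiv (Equiv.addRight (h : G)) _ _ fun _ => rfl
  refine mul_left_cancel₀ hH ?_
  calc (Fintype.card H : k) * ∑ g, (q g : k) = ∑ h : H, ∑ g, (q (g + h) : k) := by
        simp [shift]
    _ = ∑ g, (q g : k) * ∑ h : H, hq.bcharRight g H h := by
        rw [Finset.sum_comm]
        refine Fintype.sum_congr _ _ fun g => ?_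
        rw [Finset.mul_sum]
        refine Fintype.sum_congr _ _ fun h => ?_
        simp [IsQuadForm.bcharRight, map_add_eq_bchar_mul_mul q, hiso h h.2, mul_comm]
    _ = ∑ g, if g ∈ P then (Fintype.card H : k) * q g else 0 := by
        simp [hq.sum_bcharRight, hq.mem_orthogonal, hP, mul_comm]
    _ = (Fintype.card H : k) * ∑ x : P, (q x : k) := by
        rw [← Finset.sum_filter, Finset.mul_sum]
        exact Finset.sum_subtype _ (by simp) _

theorem IsQuadForm.tauPlus_eq_tauPlus_mul_card [CharZero k] [Finite G] {q : G → kˣ}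
    (hq : IsQuadForm q) {H : AddSubgroup G} (hiso : ∀ h ∈ H, q h = 1)
    {P : AddSubgroup G} (hP : ∀ g, g ∈ P ↔ ∀ h ∈ H, bchar q g h = 1)
    (qbar : P ⧸ H.addSubgroupOf P → kˣ) (hqbar : ∀ x : P, qbar x = q x) :
    tauPlus q = tauPlus qbar * Nat.card H := by
  have := Fintype.ofFinite G
  have := Fintype.ofFinite H
  have := Fintype.ofFinite P
  have := Fintype.ofFinite (P ⧸ H.addSubgroupOf P)
  have hHP : H ≤ P := fun h hh => (hP h).2 (bchar_eq_one_of_isotropic hiso h hh)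
  have hcard : Nat.card (H.addSubgroupOf P) = Nat.card H :=
    Nat.card_congr (AddSubgroup.addSubgroupOfEquivOfLe hHP).toEquiv
  rw [tauPlus, tauPlus, finsum_eq_sum_of_fintype, finsum_eq_sum_of_fintype,
    hq.sum_eq_sum_orthogonal hiso hP]
  calc ∑ x : P, (q x : k) = ∑ x : P, (qbar x : k) := by simp only [hqbar]
    _ = Nat.card (H.addSubgroupOf P) • ∑ c, (qbar c : k) :=
        QuotientAddGroup.sum_comp_mk _ fun c => (qbar c : k)
    _ = (∑ c, (qbar c : k)) * Nat.card H := by rw [hcard, nsmul_eq_mul, mul_comm]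

end

theorem gauss_sum_isotropic_subquotient_general
    {k : Type*} [Field k] [CharZero k]
    {G : Type*} [AddCommGroup G] [Finite G]
    (q : G → kˣ) (hq : IsQuadForm q)
    (H : AddSubgroup G) (hiso : ∀ h ∈ H, q h = 1) :
    (∀ h ∈ H, ∀ h' ∈ H, bchar q h h' = 1) ∧
    (∀ g : G, (∀ h ∈ H, bchar q g h = 1) → ∀ h ∈ H, q (g + h) = q g) ∧
    ∃ P : AddSubgroup G,
      (∀ g : G, g ∈ P ↔ ∀ h ∈ H, bchar q g h = 1) ∧
      ∃ qbar : (↥P ⧸ H.addSubgroupOf P) → kˣ,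
        IsQuadForm qbar ∧
        (∀ x : ↥P, qbar (QuotientAddGroup.mk x) = q (x : G)) ∧
        tauPlus q = tauPlus qbar * (Nat.card H : k) ∧
        tauMinus q = tauMinus qbar * (Nat.card H : k) := by
  have hP (g : G) : g ∈ hq.orthogonal H ↔ ∀ h ∈ H, bchar q g h = 1 := hq.mem_orthogonal
  have hP_inv (g : G) : g ∈ hq.orthogonal H ↔ ∀ h ∈ H, bchar q⁻¹ g h = 1 := by
    simp only [hP, bchar_inv, inv_eq_one]
  set qbar := inducedForm q H (hq.orthogonal H) (fun g hg => (hP g).1 hg) hiso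
  refine ⟨bchar_eq_one_of_isotropic hiso, fun g hg h hh => map_add_eq_of_bchar_eq_one hiso hg hh,
    hq.orthogonal H, hP, qbar, hq.inducedForm .., fun _ => rfl,
    hq.tauPlus_eq_tauPlus_mul_card hiso hP qbar fun _ => rfl, ?_⟩
  rw [tauMinus_eq_tauPlus_inv, tauMinus_eq_tauPlus_inv]
  exact hq.inv.tauPlus_eq_tauPlus_mul_card (by simpa using hiso) hP_inv qbar⁻¹ fun _ => rfl

/-- For a pre-metric group `(G,q)` and an isotropic subgroup `H ⊆ G`:
`H ⊆ H⊥`; `q(g+h) = q(g)` for `g ∈ H⊥`, `h ∈ H`; `q` induces a quadratic form `q̃` on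
`H⊥/H`, and `τ±(G,q) = τ±(H⊥/H, q̃) · |H|`. -/
theorem gauss_sum_isotropic_subquotient
    {k : Type*} [Field k] [IsAlgClosed k] [CharZero k]
    {G : Type*} [AddCommGroup G] [Finite G]
    (q : G → kˣ) (hq : IsQuadForm q)
    (H : AddSubgroup G) (hiso : ∀ h ∈ H, q h = 1) :
    (∀ h ∈ H, ∀ h' ∈ H, bchar q h h' = 1) ∧
    (∀ g : G, (∀ h ∈ H, bchar q g h = 1) → ∀ h ∈ H, q (g + h) = q g) ∧
    ∃ P : AddSubgroup G,
      (∀ g : G, g ∈ P ↔ ∀ h ∈ H, bchar q g h = 1) ∧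
      ∃ qbar : (↥P ⧸ H.addSubgroupOf P) → kˣ,
        IsQuadForm qbar ∧
        (∀ x : ↥P, qbar (QuotientAddGroup.mk x) = q (x : G)) ∧
        tauPlus q = tauPlus qbar * (Nat.card H : k) ∧
        tauMinus q = tauMinus qbar * (Nat.card H : k) :=
  gauss_sum_isotropic_subquotient_general q hq H hiso
end

section
/- Let (G,q) be a metric group. Then τ⁺(G,q)·τ⁻(G,q) = |G| (the order |G| regarded as an element of k). -/
/-!
Substituting `g = h + x` in `τ⁺ τ⁻ = ∑_{g,h} q(g) q(h)⁻¹` and using `q(h + x) q(h)⁻¹ = b(h,x) q(x)`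
gives `τ⁺ τ⁻ = ∑_x q(x) ∑_h b(h,x)`. Each `b(·,x)` is a character of `G`, nontrivial for `x ≠ 0`
by non-degeneracy, so only `x = 0` contributes, with `q(0) · |G| = |G|`.
-/

section

variable {k : Type*} [Field k] {G : Type*} [AddCommGroup G] {q : G → kˣ}

lemma bchar_comm (q : G → kˣ) (g h : G) : bchar q g h = bchar q h g := by
  rw [bchar, bchar, add_comm h g, mul_right_comm]

lemma bchar_mul_apply_right (q : G → kˣ) (g h : G) : bchar q g h * q h = q (g + h) * (q g)⁻¹ := by
  rw [bchar, inv_mul_cancel_right]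

lemma IsQuadForm.bchar_zero_left_s2 (hq : IsQuadForm q) (h : G) : bchar q 0 h = 1 := by
  simpa using hq.bchar_add_left 0 0 h

lemma IsQuadForm.map_zero (hq : IsQuadForm q) : q 0 = 1 := by
  simpa [bchar] using hq.bchar_zero_left_s2 0

def IsQuadForm.bcharAddChar (hq : IsQuadForm q) (x : G) : AddChar G k where
  toFun h := bchar q h x
  map_zero_eq_one' := by simp [hq.bchar_zero_left_s2]
  map_add_eq_mul' g h := by simp [hq.bchar_add_left]

@[simp]
lemma IsQuadForm.bcharAddChar_apply (hq : IsQuadForm q) (x h : G) :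
    hq.bcharAddChar x h = bchar q h x := rfl

lemma IsQuadForm.bcharAddChar_ne_zero (hq : IsQuadForm q) (hnd : Nondeg q) {x : G} (hx : x ≠ 0) :
    hq.bcharAddChar x ≠ 0 := by
  intro htriv
  refine hx (hnd (funext fun h => ?_))
  have hbh : (bchar q h x : k) = 1 := by simpa using DFunLike.congr_fun htriv h
  change bchar q x h = bchar q 0 h
  rw [bchar_comm, Units.val_eq_one.mp hbh, hq.bchar_zero_left_s2]

lemma IsQuadForm.sum_bchar_eq_zero [Fintype G] (hq : IsQuadForm q) (hnd : Nondeg q) {x : G}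
    (hx : x ≠ 0) : ∑ h, (bchar q h x : k) = 0 := by
  classical
  simpa [hq.bcharAddChar_ne_zero hnd hx] using (hq.bcharAddChar x).sum_eq_ite

lemma tauPlus_mul_tauMinus_eq_sum [Fintype G] (q : G → kˣ) :
    tauPlus q * tauMinus q = ∑ x, (q x : k) * ∑ h, (bchar q h x : k) := by
  rw [tauPlus, tauMinus, finsum_eq_sum_of_fintype, finsum_eq_sum_of_fintype, Finset.sum_mul_sum,
    Finset.sum_comm]
  calc ∑ h, ∑ g, (q g : k) * ((q h)⁻¹ : kˣ)
      = ∑ h, ∑ x, (q (h + x) : k) * ((q h)⁻¹ : kˣ) := by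
        refine Finset.sum_congr rfl fun h _ => ?_
        exact (Fintype.sum_equiv (Equiv.addLeft h) _ _ fun x => rfl).symm
    _ = ∑ h, ∑ x, (bchar q h x : k) * q x := by
        simp only [← Units.val_mul, bchar_mul_apply_right]
    _ = ∑ x, (q x : k) * ∑ h, (bchar q h x : k) := by
        rw [Finset.sum_comm]
        simp only [Finset.mul_sum, mul_comm]

end

theorem gauss_sum_mul_gauss_sum_inv_general
    {k : Type*} [Field k]
    {G : Type*} [AddCommGroup G] [Finite G]
    (q : G → kˣ) (hq : IsQuadForm q) (hnd : Nondeg q) :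
    tauPlus q * tauMinus q = (Nat.card G : k) := by
  have := Fintype.ofFinite G
  rw [tauPlus_mul_tauMinus_eq_sum, Finset.sum_eq_single_of_mem 0 (Finset.mem_univ 0)
    fun x _ hx => by rw [hq.sum_bchar_eq_zero hnd hx, mul_zero]]
  simp [bchar_comm q _ 0, hq.bchar_zero_left_s2, hq.map_zero, Nat.card_eq_fintype_card]

/-- For a metric group `(G,q)` one has `τ⁺(G,q)·τ⁻(G,q) = |G|` in `k`. -/
theorem gauss_sum_mul_gauss_sum_inv
    {k : Type*} [Field k] [IsAlgClosed k] [CharZero k]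
    {G : Type*} [AddCommGroup G] [Finite G]
    (q : G → kˣ) (hq : IsQuadForm q) (hnd : Nondeg q) :
    tauPlus q * tauMinus q = (Nat.card G : k) :=
  gauss_sum_mul_gauss_sum_inv_general q hq hnd
end

section
/- Let G be a finite abelian group whose order is a power of 2, and suppose there exists a symmetric bicharacter b : G × G → kˣ (i.e. b is bimultiplicative and b(x,y) = b(y,x)) such that b(x,x) ≠ 1 for every x ∈ G with x ≠ 0. Then |G| ≤ 2. -/
/-!
A symmetric bicharacter `b` satisfies `b(2x, 2x) = b(x, 4x)`, so an anisotropic one kills no element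
of order `4`; on a `2`-group this forces `2x = 0` for all `x`. Then `b(x, y)² = b(x, 2y) = 1`, so
`x ↦ b(x, x)` is a homomorphism into the square roots of unity, injective by anisotropy, and a field
has at most two square roots of unity.
-/

section Bicharacter

variable {G M : Type*} [AddCommGroup G] [CommGroup M] {b : G → G → M}

theorem bichar_zero_right (hb_right : ∀ x y z : G, b x (y + z) = b x y * b x z) (x : G) :
    b x 0 = 1 := by
  simpa using hb_right x 0 0

theorem bichar_two_nsmul_left (hb_left : ∀ x y z : G, b (x + y) z = b x z * b y z)
    (hb_right : ∀ x y z : G, b x (y + z) = b x y * b x z) (x y : G) :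
    b (2 • x) y = b x (2 • y) := by
  rw [two_nsmul, two_nsmul, hb_left, hb_right]

theorem two_nsmul_eq_zero_of_four_nsmul_eq_zero (hb_left : ∀ x y z : G, b (x + y) z = b x z * b y z)
    (hb_right : ∀ x y z : G, b x (y + z) = b x y * b x z) (hanis : ∀ x : G, x ≠ 0 → b x x ≠ 1)
    {x : G} (hx : 4 • x = 0) : 2 • x = 0 := by
  by_contra hx2
  refine hanis _ hx2 ?_
  rw [bichar_two_nsmul_left hb_left hb_right, smul_smul, show 2 * 2 = 4 from rfl, hx,
    bichar_zero_right hb_right]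

theorem bichar_mul_self_eq_one_of_two_nsmul_eq_zero
    (hb_right : ∀ x y z : G, b x (y + z) = b x y * b x z) (hG : ∀ x : G, 2 • x = 0) (x y : G) :
    b x y * b x y = 1 := by
  rw [← hb_right, ← two_nsmul, hG, bichar_zero_right hb_right]

theorem bichar_diag_add_of_two_nsmul_eq_zero (hb_left : ∀ x y z : G, b (x + y) z = b x z * b y z)
    (hb_right : ∀ x y z : G, b x (y + z) = b x y * b x z) (hb_symm : ∀ x y : G, b x y = b y x)
    (hG : ∀ x : G, 2 • x = 0) (x y : G) :
    b (x + y) (x + y) = b x x * b y y := by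
  calc b (x + y) (x + y) = b x x * b y y * (b x y * b x y) := by
        rw [hb_left, hb_right, hb_right, hb_symm y x]; ac_rfl
    _ = b x x * b y y := by rw [bichar_mul_self_eq_one_of_two_nsmul_eq_zero hb_right hG, mul_one]

theorem bichar_diag_injective_of_two_nsmul_eq_zero
    (hb_left : ∀ x y z : G, b (x + y) z = b x z * b y z)
    (hb_right : ∀ x y z : G, b x (y + z) = b x y * b x z) (hb_symm : ∀ x y : G, b x y = b y x)
    (hanis : ∀ x : G, x ≠ 0 → b x x ≠ 1) (hG : ∀ x : G, 2 • x = 0) :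
    Function.Injective fun x ↦ b x x := by
  intro x y (hxy : b x x = b y y)
  have hsum : x + y = 0 := by
    by_contra hne
    refine hanis _ hne ?_
    rw [bichar_diag_add_of_two_nsmul_eq_zero hb_left hb_right hb_symm hG, hxy,
      ← bichar_diag_add_of_two_nsmul_eq_zero hb_left hb_right hb_symm hG, ← two_nsmul, hG,
      bichar_zero_right hb_right]
  calc x = x + 2 • y := by rw [hG, add_zero]
    _ = y := by rw [two_nsmul, ← add_assoc, hsum, zero_add]

end Bicharacter

theorem two_nsmul_eq_zero_of_two_pow_succ_nsmul_eq_zero {G : Type*} [AddCommGroup G]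
    (h4 : ∀ x : G, 4 • x = 0 → 2 • x = 0) {x : G} :
    ∀ n : ℕ, 2 ^ (n + 1) • x = 0 → 2 • x = 0
  | 0, hx => by simpa using hx
  | n + 1, hx => by
    have h4x : 4 • 2 ^ n • x = 0 := by rwa [smul_smul, show 4 * 2 ^ n = 2 ^ (n + 1 + 1) by ring]
    refine two_nsmul_eq_zero_of_two_pow_succ_nsmul_eq_zero h4 n ?_
    rw [pow_succ', mul_smul]
    exact h4 _ h4x

theorem two_nsmul_eq_zero_of_card_eq_two_pow {G : Type*} [AddCommGroup G] [Finite G] {m : ℕ}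
    (hcard : Nat.card G = 2 ^ m) (h4 : ∀ x : G, 4 • x = 0 → 2 • x = 0) (x : G) : 2 • x = 0 :=
  two_nsmul_eq_zero_of_two_pow_succ_nsmul_eq_zero h4 m <| by
    rw [pow_succ, mul_smul, ← hcard, card_nsmul_eq_zero']

theorem card_le_two_of_anisotropic_symmetric_bicharacter_general
    {k : Type*} [Field k]
    {G : Type*} [AddCommGroup G] [Finite G]
    (h2 : ∃ m : ℕ, Nat.card G = 2 ^ m)
    (b : G → G → kˣ)
    (hb_left : ∀ x y z : G, b (x + y) z = b x z * b y z)
    (hb_right : ∀ x y z : G, b x (y + z) = b x y * b x z)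
    (hb_symm : ∀ x y : G, b x y = b y x)
    (hanis : ∀ x : G, x ≠ 0 → b x x ≠ 1) :
    Nat.card G ≤ 2 := by
  obtain ⟨m, hm⟩ := h2
  have hG : ∀ x : G, 2 • x = 0 := two_nsmul_eq_zero_of_card_eq_two_pow hm fun _ ↦
    two_nsmul_eq_zero_of_four_nsmul_eq_zero hb_left hb_right hanis
  have hdiag_inj := bichar_diag_injective_of_two_nsmul_eq_zero hb_left hb_right hb_symm hanis hG
  have hdiag_sq (x : G) : b x x ∈ rootsOfUnity 2 k := by
    rw [mem_rootsOfUnity, sq, bichar_mul_self_eq_one_of_two_nsmul_eq_zero hb_right hG]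
  calc Nat.card G ≤ Nat.card (rootsOfUnity 2 k) :=
        Nat.card_le_card_of_injective (fun x ↦ ⟨b x x, hdiag_sq x⟩)
          fun x y hxy ↦ hdiag_inj (congrArg Subtype.val hxy)
    _ ≤ 2 := card_rootsOfUnity k 2

/-- If a finite abelian `2`-group `G` carries a symmetric bicharacter
`b` with `b(x,x) ≠ 1` for all `x ≠ 0`, then `|G| ≤ 2`. -/
theorem card_le_two_of_anisotropic_symmetric_bicharacter
    {k : Type*} [Field k] [IsAlgClosed k] [CharZero k]
    {G : Type*} [AddCommGroup G] [Finite G]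
    (h2 : ∃ m : ℕ, Nat.card G = 2 ^ m)
    (b : G → G → kˣ)
    (hb_left : ∀ x y z : G, b (x + y) z = b x z * b y z)
    (hb_right : ∀ x y z : G, b x (y + z) = b x y * b x z)
    (hb_symm : ∀ x y : G, b x y = b y x)
    (hanis : ∀ x : G, x ≠ 0 → b x x ≠ 1) :
    Nat.card G ≤ 2 :=
  card_le_two_of_anisotropic_symmetric_bicharacter_general h2 b hb_left hb_right hb_symm hanis
end

section
/- Let G be a finite abelian group whose order is a power of 2 and let b : G × G → kˣ be a symmetric bicharacter. Then there exists a subgroup L ⊆ G with L ⊆ L⊥ and [L⊥ : L] ≤ 2, where L⊥ := {g ∈ G : b(g,h) = 1 for all h ∈ L}. -/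
theorem Units.eq_neg_one_of_sq_eq_one {R : Type*} [Ring R] [NoZeroDivisors R] {u : Rˣ}
    (h : u ^ 2 = 1) (hu : u ≠ 1) : u = -1 := by
  have : (u : R) ^ 2 = 1 := by rw [← Units.val_pow_eq_pow_val, h, Units.val_one]
  exact Units.ext ((sq_eq_one_iff.mp this).resolve_left fun h1 ↦ hu (Units.ext h1))

theorem AddSubgroup.card_le_two_mul_of_relIndex_dvd_two {G : Type*} [AddGroup G]
    {H K : AddSubgroup G} (hHK : H ≤ K) (h : H.relIndex K ∣ 2) : Nat.card K ≤ 2 * Nat.card H := by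
  rw [← relIndex_bot_left, ← relIndex_bot_left, ← relIndex_mul_relIndex ⊥ H K bot_le hHK,
    mul_comm]
  exact Nat.mul_le_mul_right _ (Nat.le_of_dvd two_pos h)

structure IsSymmBicharacter {G M : Type*} [AddCommGroup G] [CommGroup M] (b : G → G → M) :
    Prop where
  map_add_left : ∀ x y z, b (x + y) z = b x z * b y z
  comm : ∀ x y, b x y = b y x

namespace IsSymmBicharacter

variable {G : Type*} [AddCommGroup G]

section CommGroup

variable {M : Type*} [CommGroup M] {b : G → G → M}

theorem map_add_right (hb : IsSymmBicharacter b) (x y z : G) :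
    b x (y + z) = b x y * b x z := by
  rw [hb.comm, hb.map_add_left, hb.comm y, hb.comm z]

def leftHom (hb : IsSymmBicharacter b) (z : G) : G →+ Additive M :=
  AddMonoidHom.mk' (fun x ↦ .ofMul (b x z)) fun x y ↦ hb.map_add_left x y z

theorem map_zero_left (hb : IsSymmBicharacter b) (z : G) : b 0 z = 1 :=
  (hb.leftHom z).map_zero

theorem map_neg_left (hb : IsSymmBicharacter b) (x z : G) : b (-x) z = (b x z)⁻¹ :=
  (hb.leftHom z).map_neg x

theorem map_nsmul_left (hb : IsSymmBicharacter b) (n : ℕ) (x z : G) :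
    b (n • x) z = b x z ^ n :=
  (hb.leftHom z).map_nsmul n x

theorem map_zsmul_left (hb : IsSymmBicharacter b) (n : ℤ) (x z : G) :
    b (n • x) z = b x z ^ n :=
  (hb.leftHom z).map_zsmul n x

theorem map_nsmul_right (hb : IsSymmBicharacter b) (n : ℕ) (x z : G) :
    b x (n • z) = b x z ^ n := by
  rw [hb.comm, hb.map_nsmul_left, hb.comm]

theorem map_zsmul_right (hb : IsSymmBicharacter b) (n : ℤ) (x z : G) :
    b x (n • z) = b x z ^ n := by
  rw [hb.comm, hb.map_zsmul_left, hb.comm]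

def orth (hb : IsSymmBicharacter b) (L : AddSubgroup G) : AddSubgroup G where
  carrier := {g | ∀ h ∈ L, b g h = 1}
  zero_mem' h _ := hb.map_zero_left h
  add_mem' {x y} hx hy h hh := by rw [hb.map_add_left, hx h hh, hy h hh, one_mul]
  neg_mem' {x} hx h hh := by rw [hb.map_neg_left, hx h hh, inv_one]

theorem sup_zmultiples_le_orth (hb : IsSymmBicharacter b) {L : AddSubgroup G}
    (hL : L ≤ hb.orth L) {z : G} (hz : z ∈ hb.orth L) (hzz : b z z = 1) :
    L ⊔ .zmultiples z ≤ hb.orth (L ⊔ .zmultiples z) := by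
  intro x hx y hy
  obtain ⟨l, hl, _, ⟨m, rfl⟩, rfl⟩ := AddSubgroup.mem_sup.mp hx
  obtain ⟨l', hl', _, ⟨n, rfl⟩, rfl⟩ := AddSubgroup.mem_sup.mp hy
  have hzl' : b z l' = 1 := hz l' hl'
  have hlz : b l z = 1 := hb.comm l z ▸ hz l hl
  simp [hb.map_add_left, hb.map_add_right, hb.map_zsmul_left, hb.map_zsmul_right,
    hL hl l' hl', hzl', hlz, hzz]

theorem exists_le_orth_forall_mem [Finite G] (hb : IsSymmBicharacter b) :
    ∃ L : AddSubgroup G, L ≤ hb.orth L ∧ ∀ z ∈ hb.orth L, b z z = 1 → z ∈ L := by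
  obtain ⟨L, hLmax⟩ := WellFoundedGT.exists_maximal inferInstance {L | L ≤ hb.orth L}
    ⟨⊥, fun x hx ↦ by simp [AddSubgroup.mem_bot.mp hx]⟩
  refine ⟨L, hLmax.prop, fun z hz hzz ↦ ?_⟩
  have hLz := hLmax.eq_of_le (hb.sup_zmultiples_le_orth hLmax.prop hz hzz) le_sup_left
  exact hLz ▸ AddSubgroup.mem_sup_right (AddSubgroup.mem_zmultiples z)

theorem two_nsmul_mem_of_pow_nsmul_mem (hb : IsSymmBicharacter b) {L : AddSubgroup G}
    (hmax : ∀ z ∈ hb.orth L, b z z = 1 → z ∈ L) {z : G} (hz : z ∈ hb.orth L) :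
    ∀ j : ℕ, 2 ^ j • z ∈ L → 2 • z ∈ L
  | 0, h => by simpa using L.nsmul_mem (by simpa using h) 2
  | 1, h => by simpa using h
  | j + 2, h => by
    refine hb.two_nsmul_mem_of_pow_nsmul_mem hmax hz (j + 1) (hmax _ (nsmul_mem hz _) ?_)
    calc b (2 ^ (j + 1) • z) (2 ^ (j + 1) • z) = b z (2 ^ j • 2 ^ (j + 2) • z) := by
          simp only [hb.map_nsmul_left, hb.map_nsmul_right, ← pow_mul]; ring_nf
      _ = 1 := hz _ (nsmul_mem h _)

theorem two_nsmul_mem (hb : IsSymmBicharacter b) {m : ℕ} (hcard : Nat.card G = 2 ^ m)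
    {L : AddSubgroup G} (hmax : ∀ z ∈ hb.orth L, b z z = 1 → z ∈ L) {z : G}
    (hz : z ∈ hb.orth L) : 2 • z ∈ L :=
  hb.two_nsmul_mem_of_pow_nsmul_mem hmax hz m <| by
    rw [← hcard, card_nsmul_eq_zero']
    exact L.zero_mem

end CommGroup

section Units

variable {R : Type*} [CommRing R] [NoZeroDivisors R] {b : G → G → Rˣ}

theorem apply_self_eq_neg_one (hb : IsSymmBicharacter b) {L : AddSubgroup G}
    (hmax : ∀ z ∈ hb.orth L, b z z = 1 → z ∈ L) (h2 : ∀ z ∈ hb.orth L, 2 • z ∈ L) {x : G}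
    (hx : x ∈ hb.orth L) (hxL : x ∉ L) : b x x = -1 :=
  Units.eq_neg_one_of_sq_eq_one (by rw [← hb.map_nsmul_right]; exact hx _ (h2 x hx))
    fun h ↦ hxL (hmax x hx h)

theorem add_mem_of_notMem_of_notMem (hb : IsSymmBicharacter b) {L : AddSubgroup G}
    (hmax : ∀ z ∈ hb.orth L, b z z = 1 → z ∈ L) (h2 : ∀ z ∈ hb.orth L, 2 • z ∈ L) {x y : G}
    (hx : x ∈ hb.orth L) (hy : y ∈ hb.orth L) (hxL : x ∉ L) (hyL : y ∉ L) : x + y ∈ L := by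
  refine hmax _ (add_mem hx hy) ?_
  calc b (x + y) (x + y) = b x x * b y y * b x (2 • y) := by
        rw [hb.map_add_left, hb.map_add_right, hb.map_add_right, hb.map_nsmul_right, hb.comm y x,
          sq]
        ac_rfl
    _ = 1 := by
        rw [hb.apply_self_eq_neg_one hmax h2 hx hxL, hb.apply_self_eq_neg_one hmax h2 hy hyL,
          hx _ (h2 y hy)]
        simp

theorem relIndex_orth_dvd_two (hb : IsSymmBicharacter b) {L : AddSubgroup G}
    (hmax : ∀ z ∈ hb.orth L, b z z = 1 → z ∈ L) (h2 : ∀ z ∈ hb.orth L, 2 • z ∈ L) :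
    L.relIndex (hb.orth L) ∣ 2 := by
  refine AddSubgroup.relIndex_dvd_two_iff.mpr ?_
  by_cases h : hb.orth L ≤ L
  · exact ⟨0, zero_mem _, fun y hy ↦ .inr (h hy)⟩
  · obtain ⟨x, hx, hxL⟩ := SetLike.not_le_iff_exists.mp h
    exact ⟨x, hx, fun y hy ↦ or_iff_not_imp_right.mpr fun hyL ↦
      hb.add_mem_of_notMem_of_notMem hmax h2 hy hx hyL hxL⟩

end Units

end IsSymmBicharacter

theorem exists_almost_lagrangian_subgroup_general
    {k : Type*} [Field k]
    {G : Type*} [AddCommGroup G] [Finite G]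
    (h2 : ∃ m : ℕ, Nat.card G = 2 ^ m)
    (b : G → G → kˣ)
    (hb_left : ∀ x y z : G, b (x + y) z = b x z * b y z)
    (hb_symm : ∀ x y : G, b x y = b y x) :
    ∃ L : AddSubgroup G,
      ((L : Set G) ⊆ {g : G | ∀ h ∈ L, b g h = 1}) ∧
      Nat.card {g : G // ∀ h ∈ L, b g h = 1} ≤ 2 * Nat.card L := by
  obtain ⟨m, hcard⟩ := h2
  have hb : IsSymmBicharacter b := ⟨hb_left, hb_symm⟩
  obtain ⟨L, hL, hmax⟩ := hb.exists_le_orth_forall_mem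
  have h2L : ∀ z ∈ hb.orth L, 2 • z ∈ L := fun z hz ↦ hb.two_nsmul_mem hcard hmax hz
  exact ⟨L, hL,
    AddSubgroup.card_le_two_mul_of_relIndex_dvd_two hL (hb.relIndex_orth_dvd_two hmax h2L)⟩

/-- If `b` is a symmetric bicharacter on a finite abelian `2`-group `G`,
then there is a subgroup `L ⊆ G` with `L ⊆ L⊥` and `[L⊥ : L] ≤ 2`. -/
theorem exists_almost_lagrangian_subgroup
    {k : Type*} [Field k] [IsAlgClosed k] [CharZero k]
    {G : Type*} [AddCommGroup G] [Finite G]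
    (h2 : ∃ m : ℕ, Nat.card G = 2 ^ m)
    (b : G → G → kˣ)
    (hb_left : ∀ x y z : G, b (x + y) z = b x z * b y z)
    (hb_right : ∀ x y z : G, b x (y + z) = b x y * b x z)
    (hb_symm : ∀ x y : G, b x y = b y x) :
    ∃ L : AddSubgroup G,
      ((L : Set G) ⊆ {g : G | ∀ h ∈ L, b g h = 1}) ∧
      Nat.card {g : G // ∀ h ∈ L, b g h = 1} ≤ 2 * Nat.card L :=
  exists_almost_lagrangian_subgroup_general h2 b hb_left hb_symm
end

section
/- Let A be a finite-dimensional *-algebra over ℂ with a positive trace l. Then for every idempotent e ∈ A with e ≠ 0 (i.e. e² = e), l(e) is a positive real number. -/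
/-!
Kaplansky's trick: for an idempotent `e`, the element `z = 1 + (e - e⋆)(e - e⋆)⋆` is
self-adjoint and satisfies `z e = e z = e e⋆ e`, so it commutes with `e` and `e⋆`. When `z` is
invertible, `p = e e⋆ z⁻¹` is a self-adjoint idempotent with `p e = e` and `e p = p`, so a trace
takes the same value on `e` and on `p = p p⋆`. Faithful positivity of `l` makes `z` a right
non-zero-divisor, since `l (a z a⋆) = l (a a⋆) + l ((a b)(a b)⋆)` for `z = 1 + b b⋆`; in finite
dimension it is then invertible.
-/

open ComplexOrder

section Kaplansky

variable {R : Type*} [Ring R] [StarRing R] {e : R}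

def kaplanskyElem (e : R) : R :=
  1 + (e - star e) * star (e - star e)

lemma star_kaplanskyElem (e : R) : star (kaplanskyElem e) = kaplanskyElem e := by
  rw [kaplanskyElem, star_add, star_one, star_mul, star_star]

lemma kaplanskyElem_mul_of_isIdempotentElem (he : IsIdempotentElem e) :
    kaplanskyElem e * e = e * star e * e := by
  have hf : star e * star e = star e := he.star.eq
  simp only [kaplanskyElem, star_sub, star_star, sub_mul, mul_sub, add_mul, one_mul, mul_assoc,
    he.eq, hf]
  abel

lemma mul_kaplanskyElem_of_isIdempotentElem (he : IsIdempotentElem e) :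
    e * kaplanskyElem e = e * star e * e := by
  have hf : star e * star e = star e := he.star.eq
  simp only [kaplanskyElem, star_sub, star_star, sub_mul, mul_sub, mul_add, mul_one,
    ← mul_assoc, he.eq, hf]
  abel

lemma exists_isStarProjection_of_isUnit_kaplanskyElem (he : IsIdempotentElem e)
    (hz : IsUnit (kaplanskyElem e)) :
    ∃ p : R, IsStarProjection p ∧ p * e = e ∧ e * p = p := by
  obtain ⟨u, hu⟩ := hz
  have hue : Commute (u : R) e := by
    rw [Commute, SemiconjBy, hu, kaplanskyElem_mul_of_isIdempotentElem he,
      mul_kaplanskyElem_of_isIdempotentElem he]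
  have huf : Commute (u : R) (star e) := by
    have := hue.star_star
    rwa [hu, star_kaplanskyElem, ← hu] at this
  have hye : Commute (↑u⁻¹ : R) e := hue.units_inv_left
  have hyf : Commute (↑u⁻¹ : R) (star e) := huf.units_inv_left
  have hy_star : star (↑u⁻¹ : R) = ↑u⁻¹ := by
    rw [← Units.coe_star_inv]
    congr
    ext
    rw [Units.coe_star, hu, star_kaplanskyElem]
  have hpe : e * star e * ↑u⁻¹ * e = e := by
    rw [mul_assoc _ _ e, hye.eq, ← mul_assoc, ← mul_kaplanskyElem_of_isIdempotentElem he, ← hu,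
      mul_assoc, Units.mul_inv, mul_one]
  refine ⟨e * star e * ↑u⁻¹, ⟨?_, ?_⟩, hpe, by rw [← mul_assoc, ← mul_assoc, he.eq]⟩
  · rw [IsIdempotentElem, ← mul_assoc, ← mul_assoc, hpe]
  · rw [IsSelfAdjoint, star_mul, star_mul, star_star, hy_star, mul_assoc,
      (hye.mul_right hyf).eq, mul_assoc]

end Kaplansky

lemma isRightRegular_one_add_mul_star {A : Type*} [Ring A] [StarRing A] (l : A →+ ℂ)
    (hpos : ∀ a : A, a ≠ 0 → 0 < l (a * star a)) (b : A) :
    IsRightRegular (1 + b * star b) := by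
  refine isRightRegular_iff_left_eq_zero_of_mul.2 fun a ha => ?_
  by_contra ha0
  have hsplit : a * (1 + b * star b) * star a = a * star a + a * b * star (a * b) := by
    rw [star_mul]; noncomm_ring
  have hb : 0 ≤ l (a * b * star (a * b)) := by
    rcases eq_or_ne (a * b) 0 with h | h
    · rw [h, zero_mul, map_zero]
    · exact (hpos _ h).le
  have hsum := add_pos_of_pos_of_nonneg (hpos a ha0) hb
  rw [← map_add, ← hsplit, ha, zero_mul, map_zero] at hsum
  exact hsum.false

theorem positive_trace_of_idempotent_general
    (A : Type*) [Ring A] [Algebra ℂ A] [StarRing A]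
    [FiniteDimensional ℂ A]
    (l : A →ₗ[ℂ] ℂ)
    (htrace : ∀ a b : A, l (a * b) = l (b * a))
    (hpos : ∀ a : A, a ≠ 0 → ∃ r : ℝ, 0 < r ∧ l (a * star a) = (r : ℂ))
    (e : A) (he : e * e = e) (hne : e ≠ 0) :
    ∃ r : ℝ, 0 < r ∧ l e = (r : ℂ) := by
  have hpos' : ∀ a : A, a ≠ 0 → 0 < l (a * star a) := fun a ha => by
    obtain ⟨r, hr, h⟩ := hpos a ha
    exact h ▸ Complex.zero_lt_real.2 hr
  have : IsArtinianRing A := .of_finite ℂ A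
  obtain ⟨p, hp, hpe, hep⟩ := exists_isStarProjection_of_isUnit_kaplanskyElem he
    (IsArtinianRing.isUnit_iff_isRightRegular.2
      (isRightRegular_one_add_mul_star l.toAddMonoidHom hpos' _))
  have hp0 : p ≠ 0 := by
    rintro rfl
    exact hne (hpe.symm.trans (zero_mul e))
  obtain ⟨r, hr, hlp⟩ := hpos p hp0
  refine ⟨r, hr, ?_⟩
  calc l e = l (p * e) := by rw [hpe]
    _ = l (e * p) := htrace p e
    _ = l (p * star p) := by rw [hep, hp.isSelfAdjoint.star_eq, hp.isIdempotentElem.eq]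
    _ = r := hlp

/-- Let `A` be a finite-dimensional `*`-algebra over `ℂ` with a
positive trace `l`. Then `l(e)` is a positive real number for every nonzero
idempotent `e ∈ A`. -/
theorem positive_trace_of_idempotent
    (A : Type*) [Ring A] [Algebra ℂ A] [StarRing A] [StarModule ℂ A]
    [FiniteDimensional ℂ A]
    (l : A →ₗ[ℂ] ℂ)
    (htrace : ∀ a b : A, l (a * b) = l (b * a))
    (hstar : ∀ a : A, l (star a) = starRingEnd ℂ (l a))
    (hpos : ∀ a : A, a ≠ 0 → ∃ r : ℝ, 0 < r ∧ l (a * star a) = (r : ℂ))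
    (e : A) (he : e * e = e) (hne : e ≠ 0) :
    ∃ r : ℝ, 0 < r ∧ l e = (r : ℂ) :=
  positive_trace_of_idempotent_general A l htrace hpos e he hne
end

section
/- Let A be a finite-dimensional *-algebra over ℂ with a positive trace l. If a ∈ A satisfies l(aⁿ) = 0 for every integer n ≥ 1, then a is nilpotent. -/
/-!
If `a` is not nilpotent, Fitting's lemma in the commutative finite-dimensional algebra `ℂ[a]`
gives a nonzero idempotent `e = b a` with `b ∈ ℂ[a]`, and `l e = 0` because `l` vanishes on
`a ℂ[a]`. On the other hand, faithfulness of `l` makes every `1 + w w⋆` invertible, so (Kaplansky)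
`p = e e⋆ (1 + (e - e⋆)(e - e⋆)⋆)⁻¹` is a self-adjoint projection with `p e = e` and `e p = p`;
then `l e = l (e p) = l (p e) = l p = l (p p⋆) > 0`.
-/

open scoped ComplexOrder IsMulCommutative

theorem exists_isIdempotentElem_mem_span_singleton {R : Type*} [CommRing R]
    [IsArtinianRing R] {x : R} (hx : ¬IsNilpotent x) :
    ∃ e ∈ Ideal.span {x}, IsIdempotentElem e ∧ e ≠ 0 := by
  obtain ⟨n, y, hy⟩ := IsArtinian.exists_pow_succ_smul_dvd x (1 : R)
  simp only [smul_eq_mul, mul_one, Nat.succ_eq_add_one] at hy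
  have hfix : ∀ k, x ^ n * (x * y) ^ k = x ^ n := by
    intro k
    induction k with
    | zero => rw [pow_zero, mul_one]
    | succ k ih => rw [pow_succ, ← mul_assoc, ih]; linear_combination hy
  refine ⟨(x * y) ^ (n + 1), Ideal.pow_mem_of_mem _ ?_ _ n.succ_pos, ?_, fun he => hx ⟨n, ?_⟩⟩
  · exact Ideal.mul_mem_right y _ (Ideal.mem_span_singleton_self x)
  · show _ * _ = _
    linear_combination (x * y ^ (n + 1)) * hfix (n + 1)
  · rw [← hfix (n + 1), he, mul_zero]

theorem map_mul_eq_zero_of_mem_adjoin {K A M : Type*} [CommSemiring K] [Semiring A]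
    [Algebra K A] [AddCommMonoid M] [Module K M] (l : A →ₗ[K] M) {a : A}
    (ha : ∀ n, l (a ^ (n + 1)) = 0) {b : A} (hb : b ∈ Algebra.adjoin K {a}) : l (b * a) = 0 := by
  have hb' : b ∈ Submodule.span K (Submonoid.powers a : Set A) := by
    rwa [Submonoid.powers_eq_closure, ← Algebra.adjoin_eq_span]
  clear hb
  induction hb' using Submodule.span_induction with
  | mem x hx =>
    obtain ⟨k, rfl⟩ := hx
    rw [← pow_succ, ha]
  | zero => rw [zero_mul, map_zero]
  | add x y _ _ hx hy => rw [add_mul, map_add, hx, hy, add_zero]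
  | smul c x _ hx => rw [smul_mul_assoc, map_smul, hx, smul_zero]

theorem exists_isIdempotentElem_mul_of_not_isNilpotent {K A : Type*} [Field K] [Ring A]
    [Algebra K A] [FiniteDimensional K A] {a : A} (ha : ¬IsNilpotent a) :
    ∃ b ∈ Algebra.adjoin K {a}, IsIdempotentElem (b * a) ∧ b * a ≠ 0 := by
  let B := Algebra.adjoin K {a}
  have : IsArtinianRing B := IsArtinianRing.of_finite K B
  have ha' : ¬IsNilpotent (⟨a, Algebra.self_mem_adjoin_singleton K a⟩ : B) :=
    fun h => ha (h.map B.val)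
  obtain ⟨e, he, hidem, hne⟩ := exists_isIdempotentElem_mem_span_singleton ha'
  obtain ⟨b, rfl⟩ := Ideal.mem_span_singleton'.1 he
  exact ⟨b, b.2, hidem.map B.val, fun h => hne (Subtype.ext h)⟩

theorem exists_isStarProjection_of_isIdempotentElem {R : Type*} [Ring R] [StarRing R] {e : R}
    (he : IsIdempotentElem e) (hu : IsUnit (1 + (e - star e) * star (e - star e))) :
    ∃ p, IsStarProjection p ∧ p * e = e ∧ e * p = p := by
  obtain ⟨u, hu⟩ := hu
  have hes : star e * star e = star e := by rw [← star_mul, he.eq]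
  have he' : ∀ x, e * (e * x) = e * x := fun x => by rw [← mul_assoc, he.eq]
  have hue : (u : R) * e = e * star e * e := by
    simp only [hu, star_sub, star_star, add_mul, mul_sub, sub_mul, one_mul, mul_assoc, he.eq, hes]
    abel
  have heu : e * u = e * star e * e := by
    simp only [hu, star_sub, star_star, mul_add, mul_sub, sub_mul, mul_one, mul_assoc, he.eq, hes,
      he']
    abel
  have hcomm : Commute (u : R) e := heu.trans hue.symm |>.symm
  have hstar_u : star (u : R) = u := by
    rw [hu]; exact (IsSelfAdjoint.one R).add (IsSelfAdjoint.mul_star_self _)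
  have hcomm_star : Commute (u : R) (star e) := by
    simpa [hstar_u] using hcomm.star_star
  have hstar_inv : star (↑u⁻¹ : R) = ↑u⁻¹ := by
    rw [← Units.coe_star_inv]; congr; ext; exact hstar_u
  set p := e * star e * ↑u⁻¹
  have hpe : p * e = e := by
    rw [mul_assoc, (hcomm.units_inv_left).eq, ← mul_assoc, ← heu, mul_assoc, u.mul_inv, mul_one]
  refine ⟨p, ⟨?_, ?_⟩, hpe, by simp only [p, ← mul_assoc, he.eq]⟩
  · show p * p = p
    rw [show p * p = p * e * star e * ↑u⁻¹ by simp only [p, mul_assoc], hpe]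
  · show star p = p
    rw [star_mul, hstar_inv, star_mul_star]
    exact ((hcomm.mul_right hcomm_star).units_inv_left).eq

section PositiveTrace

variable {A M F : Type*} [Ring A] [StarRing A] [AddCommMonoid M] [PartialOrder M]
  [IsOrderedCancelAddMonoid M] [FunLike F A M] [AddMonoidHomClass F A M] {l : F}

theorem isUnit_one_add_mul_star [IsArtinianRing A] (hpos : ∀ x ≠ 0, 0 < l (x * star x))
    (w : A) : IsUnit (1 + w * star w) := by
  rw [IsArtinianRing.isUnit_iff_isRightRegular, isRightRegular_iff_left_eq_zero_of_mul]
  intro z hz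
  by_contra hz0
  have hnonneg : 0 ≤ l (z * w * star (z * w)) := by
    obtain h | h := eq_or_ne (z * w) 0
    · rw [h, zero_mul, map_zero]
    · exact (hpos _ h).le
  have : l (z * (1 + w * star w) * star z) = l (z * star z) + l (z * w * star (z * w)) := by
    simp only [star_mul, mul_add, mul_one, add_mul, map_add, mul_assoc]
  rw [hz, zero_mul, map_zero] at this
  exact (add_pos_of_pos_of_nonneg (hpos z hz0) hnonneg).ne this

theorem map_pos_of_isIdempotentElem [IsArtinianRing A] (htrace : ∀ a b : A, l (a * b) = l (b * a))
    (hpos : ∀ x ≠ 0, 0 < l (x * star x)) {e : A} (he : IsIdempotentElem e) (hne : e ≠ 0) :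
    0 < l e := by
  obtain ⟨p, hp, hpe, hep⟩ :=
    exists_isStarProjection_of_isIdempotentElem he (isUnit_one_add_mul_star hpos _)
  have hp0 : p ≠ 0 := fun h => hne (by rw [← hpe, h, zero_mul])
  calc 0 < l (p * star p) := hpos p hp0
    _ = l e := by rw [hp.isSelfAdjoint.star_eq, hp.isIdempotentElem.eq, ← hep, htrace, hpe]

end PositiveTrace

theorem nilpotent_of_trace_powers_eq_zero_general
    (A : Type*) [Ring A] [Algebra ℂ A] [StarRing A]
    [FiniteDimensional ℂ A]
    (l : A →ₗ[ℂ] ℂ)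
    (htrace : ∀ a b : A, l (a * b) = l (b * a))
    (hpos : ∀ a : A, a ≠ 0 → ∃ r : ℝ, 0 < r ∧ l (a * star a) = (r : ℂ))
    (a : A) (ha : ∀ n : ℕ, 1 ≤ n → l (a ^ n) = 0) :
    IsNilpotent a := by
  by_contra hnil
  have hpos' : ∀ x ≠ 0, 0 < l (x * star x) := fun x hx => by
    obtain ⟨r, hr, hlr⟩ := hpos x hx
    exact hlr ▸ Complex.zero_lt_real.2 hr
  have : IsArtinianRing A := IsArtinianRing.of_finite ℂ A
  obtain ⟨b, hb, hidem, hne⟩ := exists_isIdempotentElem_mul_of_not_isNilpotent (K := ℂ) hnil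
  have hzero : l (b * a) = 0 := map_mul_eq_zero_of_mem_adjoin l (fun n => ha (n + 1) n.succ_pos) hb
  exact (map_pos_of_isIdempotentElem htrace hpos' hidem hne).ne' hzero

/-- Let `A` be a finite-dimensional `*`-algebra over `ℂ` with a
positive trace `l`. If `l(aⁿ) = 0` for all `n ≥ 1`, then `a` is nilpotent. -/
theorem nilpotent_of_trace_powers_eq_zero
    (A : Type*) [Ring A] [Algebra ℂ A] [StarRing A] [StarModule ℂ A]
    [FiniteDimensional ℂ A]
    (l : A →ₗ[ℂ] ℂ)
    (htrace : ∀ a b : A, l (a * b) = l (b * a))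
    (hstar : ∀ a : A, l (star a) = starRingEnd ℂ (l a))
    (hpos : ∀ a : A, a ≠ 0 → ∃ r : ℝ, 0 < r ∧ l (a * star a) = (r : ℂ))
    (a : A) (ha : ∀ n : ℕ, 1 ≤ n → l (a ^ n) = 0) :
    IsNilpotent a :=
  nilpotent_of_trace_powers_eq_zero_general A l htrace hpos a ha
end
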